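/- Let l be the list (n repeated n+1 times) followed by (1, 2, ..., n). Then the expressed permutation P obtained by first-occurrence deduplication of l is (n, 1, 2, ..., n−1), and a single deletion, insertion, or substitution of one element of l cannot make P equal to the identity (1, 2, ..., n), for n ≥ 3. -/

import Mathlib

/-- First-occurrence deduplication: keep only the first occurrence of each element. -/
def expressList : List ℕ → List ℕ
  | [] => []
  | a :: l => a :: expressList (l.filter (· ≠ a))
termination_by l => l.length
decreasing_by
  first
  | simpa using Nat.lt_succ_of_le (List.length_filter_le _ _)
  | (simp; exact (List.length_filter_le _ _).trans_eq List.length_attach)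
  | (simp; exact Nat.lt_succ_of_le ((List.length_filter_le _ _).trans_eq List.length_attach))

/-- The identity permutation `(1, 2, …, n)` as a list. -/
def idList (n : ℕ) : List ℕ := (List.range n).map (· + 1)

/-- The worst-case list: `n` repeated `n + 1` times, followed by `1, 2, …, n`. -/
def worstList1 (n : ℕ) : List ℕ := List.replicate (n + 1) n ++ idList n

/-! Deduplication keeps the first entry of a list, and also the second one when it differs from
the first. Every single edit of `worstList1 n = n, n, n, …` leaves `n` among its first two entries,
whereas the identity list begins `1, 2`; for `n ≥ 3` these are incompatible. -/

lemma expressList_cons (a : ℕ) (l : List ℕ) :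
    expressList (a :: l) = a :: expressList (l.filter (· ≠ a)) := by
  rw [expressList]

lemma head?_expressList (l : List ℕ) : (expressList l).head? = l.head? := by
  cases l <;> simp [expressList]

lemma expressList_of_nodup {l : List ℕ} (h : l.Nodup) : expressList l = l := by
  induction l with
  | nil => simp [expressList]
  | cons a l ih =>
    obtain ⟨ha, hl⟩ := List.nodup_cons.mp h
    have hfilter : l.filter (· ≠ a) = l :=
      List.filter_eq_self.mpr fun b hb => by simpa using ne_of_mem_of_not_mem hb ha
    rw [expressList_cons, hfilter, ih hl]

lemma expressList_cons_cons_of_ne {a b : ℕ} (hab : a ≠ b) (l : List ℕ) :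
    ∃ t, expressList (a :: b :: l) = a :: b :: t := by
  rw [expressList_cons, List.filter_cons_of_pos (by simpa using hab.symm), expressList_cons]
  exact ⟨_, rfl⟩

lemma idList_eq_range' (n : ℕ) : idList n = List.range' 1 n := by
  simp [idList, List.range'_eq_map_range, add_comm]

lemma idList_filter_ne_self (n : ℕ) : (idList n).filter (· ≠ n) = idList (n - 1) := by
  cases n with
  | zero => rfl
  | succ m =>
    rw [idList_eq_range', idList_eq_range', List.range'_concat, List.filter_append,
      List.filter_eq_self.mpr fun b hb => by simp at hb ⊢; omega]
    simp [add_comm]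

lemma expressList_worstList1 (n : ℕ) : expressList (worstList1 n) = n :: idList (n - 1) := by
  have hnodup : (idList (n - 1)).Nodup := by
    rw [idList_eq_range']; exact List.nodup_range'
  rw [worstList1, List.replicate_succ, List.cons_append, expressList_cons, List.filter_append,
    List.filter_replicate, idList_filter_ne_self]
  simp [expressList_of_nodup hnodup]

lemma expressList_ne_idList_of_mem_take_two {n : ℕ} (hn : 3 ≤ n) {l : List ℕ}
    (h : n ∈ l.take 2) : expressList l ≠ idList n := by
  obtain ⟨m, rfl⟩ : ∃ m, n = m + 3 := ⟨n - 3, by omega⟩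
  have hid : idList (m + 3) = 1 :: 2 :: List.range' 3 (m + 1) := by
    simp [idList_eq_range', List.range'_succ]
  intro heq
  rcases l with _ | ⟨a, l⟩
  · simp at h
  have ha : a = 1 := by simpa [head?_expressList, hid] using congrArg List.head? heq
  subst ha
  rcases l with _ | ⟨b, l⟩
  · simp at h
  obtain rfl : b = m + 3 := by simp at h; omega
  obtain ⟨t, ht⟩ := expressList_cons_cons_of_ne (show 1 ≠ m + 3 by omega) l
  rw [ht, hid] at heq
  simp at heq

section Edits

variable {α : Type*} (a x : α) (t : List α) (i : ℕ)

lemma mem_take_two_eraseIdx_cons_cons : a ∈ ((a :: a :: t).eraseIdx i).take 2 := by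
  cases i <;> simp [List.eraseIdx_cons_succ]

lemma mem_take_two_insertIdx_cons : a ∈ ((a :: t).insertIdx i x).take 2 := by
  cases i <;> simp [List.insertIdx_succ_cons]

lemma mem_take_two_set_cons_cons : a ∈ ((a :: a :: t).set i x).take 2 := by
  cases i <;> simp

end Edits

lemma worstList1_eq_cons_cons {n : ℕ} (hn : 1 ≤ n) :
    worstList1 n = n :: n :: (List.replicate (n - 1) n ++ idList n) := by
  obtain ⟨k, rfl⟩ : ∃ k, n = k + 1 := ⟨n - 1, by omega⟩
  rfl

theorem worstList1_hard (n : ℕ) (hn : 3 ≤ n) :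
    expressList (worstList1 n) = n :: idList (n - 1) ∧
    ∀ l' : List ℕ,
      ((∃ i, l' = (worstList1 n).eraseIdx i) ∨
       (∃ i x, 1 ≤ x ∧ x ≤ n ∧ l' = (worstList1 n).insertIdx i x) ∨
       (∃ i x, 1 ≤ x ∧ x ≤ n ∧ l' = (worstList1 n).set i x)) →
      expressList l' ≠ idList n := by
  refine ⟨expressList_worstList1 n, fun l' hedit => expressList_ne_idList_of_mem_take_two hn ?_⟩
  rw [worstList1_eq_cons_cons (by omega)] at hedit
  rcases hedit with ⟨i, rfl⟩ | ⟨i, x, -, -, rfl⟩ | ⟨i, x, -, -, rfl⟩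
  · exact mem_take_two_eraseIdx_cons_cons ..
  · exact mem_take_two_insertIdx_cons ..
  · exact mem_take_two_set_cons_cons ..
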